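/- Let θ ∈ R^ℤ be a recurrent rule distribution. Then the one-dimensional NUCA global update rule H_θ is surjective if and only if it is pre-injective (Garden of Eden theorem for recurrent 1D NUCA). -/
import Mathlib

attribute [local instance] Classical.propDecidable

/-- A configuration `θ` over ℤ is recurrent if every finite pattern occurring in it
occurs at a second, different position (i.e. some nonzero translate of the pattern
also occurs in `θ`). -/
def Recurrent {R : Type} (θ : ℤ → R) : Prop :=
  ∀ D : Finset ℤ, ∃ t : ℤ, t ≠ 0 ∧ ∀ x ∈ D, θ (x + t) = θ x

/-- Pre-injectivity: any two distinct configurations that differ in only finitely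
many cells have distinct images. -/
def PreInjective {G S : Type} (H : (G → S) → (G → S)) : Prop :=
  ∀ c e : G → S, {x : G | c x ≠ e x}.Finite → H c = H e → c = e




private lemma pow_aux (a : ℕ) (ha : 1 ≤ a) :
    ∀ n : ℕ, a ^ (n + 1) + (n + 1) * a ^ n ≤ (a + 1) ^ (n + 1) := by
  intro n
  induction n with
  | zero => simpa using by omega
  | succ n ih =>
    show a ^ (n + 2) + (n + 2) * a ^ (n + 1) ≤ (a + 1) ^ (n + 2)
    have h : (a + 1) ^ (n + 2) = (a + 1) * (a + 1) ^ (n + 1) := by ring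
    have h2 : (a + 1) * (a ^ (n + 1) + (n + 1) * a ^ n) ≤ (a + 1) * (a + 1) ^ (n + 1) :=
      Nat.mul_le_mul_left _ ih
    have h3 : (a + 1) * (a ^ (n + 1) + (n + 1) * a ^ n) =
        a ^ (n + 2) + (n + 2) * a ^ (n + 1) + (n + 1) * a ^ n := by ring
    have h4 : (a+1) ^ (n + 1 + 1) = (a+1) ^ (n+2) := rfl
    omega

private lemma key_ineq (q C : ℕ) (hq : 2 ≤ q) :
    ∃ n : ℕ, 0 < n ∧ C * (q - 1) ^ n < q ^ n := by
  refine ⟨C * q + 1, by omega, ?_⟩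
  set a := q - 1 with ha
  have haq : q = a + 1 := by omega
  have h1 : a ^ (C * q + 1) + (C * q + 1) * a ^ (C * q) ≤ (a + 1) ^ (C * q + 1) :=
    pow_aux a (by omega) (C * q)
  have h2 : C * a ^ (C * q + 1) ≤ (C * q + 1) * a ^ (C * q) := by
    have : C * a ^ (C * q + 1) = (C * a) * a ^ (C * q) := by ring
    rw [this]
    exact Nat.mul_le_mul_right _ (by nlinarith)
  have h3 : 0 < a ^ (C * q + 1) := pow_pos (by omega) _
  have hgoal : q ^ (C * q + 1) = (a + 1) ^ (C * q + 1) := by rw [haq]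
  rw [hgoal]
  linarith

private lemma multi_match {R : Type} (θ : ℤ → R) (hrec : Recurrent θ) (D : Finset ℤ) :
    ∀ k : ℕ, ∃ T : Finset ℤ, k ≤ T.card ∧ ∀ t ∈ T, ∀ x ∈ D, θ (x + t) = θ x := by
  intro k
  induction k with
  | zero => exact ⟨∅, by simp, by simp⟩
  | succ k ih =>
    obtain ⟨T, hcard, hT⟩ := ih
    set T' : Finset ℤ := insert 0 T with hT'def
    have hT'ne : T'.Nonempty := ⟨0, Finset.mem_insert_self _ _⟩
    have hT' : ∀ t ∈ T', ∀ x ∈ D, θ (x + t) = θ x := by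
      intro t ht x hx
      rcases Finset.mem_insert.mp ht with h | h
      · simp [h]
      · exact hT t h x hx
    obtain ⟨s, hs0, hsm⟩ := hrec (T'.biUnion (fun t => D.image (· + t)))
    have hsm' : ∀ t ∈ T', ∀ x ∈ D, θ (x + t + s) = θ (x + t) := by
      intro t ht x hx
      exact hsm _ (Finset.mem_biUnion.mpr ⟨t, ht, Finset.mem_image.mpr ⟨x, hx, rfl⟩⟩)
    rcases lt_or_gt_of_ne hs0 with hneg | hpos
    · -- s < 0 : use min
      set M := T'.min' hT'ne with hM
      refine ⟨insert (M + s) T, ?_, ?_⟩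
      · have hnotin : M + s ∉ T := by
          intro hmem
          have : M ≤ M + s := T'.min'_le _ (Finset.mem_insert_of_mem hmem)
          omega
        rw [Finset.card_insert_of_notMem hnotin]; omega
      · intro t ht x hx
        rcases Finset.mem_insert.mp ht with h | h
        · subst h
          have h1 : θ (x + M + s) = θ (x + M) := hsm' M (T'.min'_mem hT'ne) x hx
          have h2 : θ (x + M) = θ x := hT' M (T'.min'_mem hT'ne) x hx
          have : x + (M + s) = x + M + s := by ring
          rw [this, h1, h2]
        · exact hT t h x hx
    · set M := T'.max' hT'ne with hM
      refine ⟨insert (M + s) T, ?_, ?_⟩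
      · have hnotin : M + s ∉ T := by
          intro hmem
          have : M + s ≤ M := T'.le_max' _ (Finset.mem_insert_of_mem hmem)
          omega
        rw [Finset.card_insert_of_notMem hnotin]; omega
      · intro t ht x hx
        rcases Finset.mem_insert.mp ht with h | h
        · subst h
          have h1 : θ (x + M + s) = θ (x + M) := hsm' M (T'.max'_mem hT'ne) x hx
          have h2 : θ (x + M) = θ x := hT' M (T'.max'_mem hT'ne) x hx
          have : x + (M + s) = x + M + s := by ring
          rw [this, h1, h2]
        · exact hT t h x hx

private lemma spacing (L : ℕ) (hL : 1 ≤ L) :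
    ∀ (k : ℕ) (T : Finset ℤ), k * L ≤ T.card →
      ∃ τ : Fin k → ℤ, (∀ j, τ j ∈ T) ∧ ∀ i j : Fin k, i < j → τ i + L ≤ τ j := by
  intro k
  induction k with
  | zero => exact fun T _ => ⟨fun j => j.elim0, fun j => j.elim0, fun i => i.elim0⟩
  | succ k ih =>
    intro T hcard
    have hne : T.Nonempty := Finset.card_pos.mp (by nlinarith)
    set mv := T.min' hne with hmv
    set T' := T.filter (fun t => mv + L ≤ t) with hT'
    have hsub : T.filter (fun t => ¬ (mv + L ≤ t)) ⊆ Finset.Icc mv (mv + L - 1) := by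
      intro t ht
      rw [Finset.mem_filter] at ht
      have h1 : mv ≤ t := T.min'_le _ ht.1
      rw [Finset.mem_Icc]
      omega
    have hcard2 : (T.filter (fun t => ¬ (mv + L ≤ t))).card ≤ L := by
      calc (T.filter (fun t => ¬ (mv + L ≤ t))).card ≤ (Finset.Icc mv (mv + L - 1)).card :=
            Finset.card_le_card hsub
        _ = L := by rw [Int.card_Icc]; omega
    have hsplit : T'.card + (T.filter (fun t => ¬ (mv + (L:ℤ) ≤ t))).card = T.card := by
      simpa using Finset.card_filter_add_card_filter_not (s := T)
        (p := fun t => mv + (L:ℤ) ≤ t)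
    have hcard' : k * L ≤ T'.card := by
      have h1 : (k+1) * L ≤ T.card := hcard
      have h2 : (k+1) * L = k * L + L := by ring
      omega
    obtain ⟨τ', hτ'T, hτ'gap⟩ := ih T' hcard'
    refine ⟨Fin.cases mv (fun i => τ' i), ?_, ?_⟩
    · intro j
      induction j using Fin.cases with
      | zero => exact T.min'_mem hne
      | succ i => exact Finset.filter_subset _ _ (hτ'T i)
    · intro i j hij
      induction j using Fin.cases with
      | zero => exact absurd hij (Nat.not_lt_zero _)
      | succ j' =>
        induction i using Fin.cases with
        | zero =>
          simp only [Fin.cases_zero, Fin.cases_succ]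
          have := hτ'T j'
          rw [hT', Finset.mem_filter] at this
          exact this.2
        | succ i' =>
          simp only [Fin.cases_succ]
          exact hτ'gap i' j' (by exact_mod_cast Nat.succ_lt_succ_iff.mp hij)

private lemma blocks_card (I : Finset ℤ) (n : ℕ) (τ : Fin n → ℤ)
    (hdisj : ∀ j k : Fin n, j ≠ k →
      Disjoint (I.image (· + τ j)) (I.image (· + τ k))) :
    (Finset.univ.biUnion (fun j : Fin n => I.image (· + τ j))).card = n * I.card := by
  rw [Finset.card_biUnion (fun j _ k _ hjk => hdisj j k hjk)]
  have : ∀ j : Fin n, (I.image (· + τ j)).card = I.card := by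
    intro j
    exact Finset.card_image_of_injective _ (add_left_injective (τ j))
  rw [Finset.sum_congr rfl (fun j _ => this j), Finset.sum_const, Finset.card_univ,
    Fintype.card_fin, smul_eq_mul]

private lemma count_avoid {S : Type} [Fintype S] (I J : Finset ℤ) (n : ℕ) (τ : Fin n → ℤ)
    (hIJ : ∀ (j : Fin n), ∀ x ∈ I, x + τ j ∈ J)
    (hdisj : ∀ j k : Fin n, j ≠ k →
      Disjoint (I.image (· + τ j)) (I.image (· + τ k)))
    (β : Fin n → ({x // x ∈ I} → S)) :
    Fintype.card {f : {x // x ∈ J} → S //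
        ∀ j : Fin n, ∃ x : {x // x ∈ I}, f ⟨(x : ℤ) + τ j, hIJ j x x.2⟩ ≠ β j x}
      ≤ (Fintype.card S ^ I.card - 1) ^ n * Fintype.card S ^ (J.card - n * I.card) := by
  classical
  set U : Finset ℤ := Finset.univ.biUnion (fun j : Fin n => I.image (· + τ j)) with hU
  have hUJ : U ⊆ J := by
    intro z hz
    rw [hU, Finset.mem_biUnion] at hz
    obtain ⟨j, _, hz⟩ := hz
    obtain ⟨x, hx, rfl⟩ := Finset.mem_image.mp hz
    exact hIJ j x hx
  -- the injection
  let Tgt := (∀ j : Fin n, {g : {x // x ∈ I} → S // g ≠ β j}) × ({z // z ∈ J \ U} → S)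
  let Ψ : {f : {x // x ∈ J} → S //
        ∀ j : Fin n, ∃ x : {x // x ∈ I}, f ⟨(x : ℤ) + τ j, hIJ j x x.2⟩ ≠ β j x} → Tgt :=
    fun f => ⟨fun j => ⟨fun x => f.1 ⟨(x : ℤ) + τ j, hIJ j x x.2⟩, by
        intro hg
        obtain ⟨x, hx⟩ := f.2 j
        exact hx (congrFun hg x)⟩,
      fun z => f.1 ⟨(z : ℤ), (Finset.mem_sdiff.mp z.2).1⟩⟩
  have hΨ : Function.Injective Ψ := by
    intro f f' h
    apply Subtype.ext
    funext z
    by_cases hz : (z : ℤ) ∈ U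
    · rw [hU, Finset.mem_biUnion] at hz
      obtain ⟨j, _, hz⟩ := hz
      obtain ⟨x, hx, hxz⟩ := Finset.mem_image.mp hz
      have h1 := congrFun (congrArg Subtype.val (congrFun (congrArg Prod.fst h) j)) ⟨x, hx⟩
      simp only [Ψ] at h1
      have hzeq : z = ⟨x + τ j, hIJ j x hx⟩ := Subtype.ext hxz.symm
      rw [hzeq]
      exact h1
    · have h2 := congrFun (congrArg Prod.snd h) ⟨(z : ℤ), Finset.mem_sdiff.mpr ⟨z.2, hz⟩⟩
      simp only [Ψ] at h2
      exact h2
  have hcard := Fintype.card_le_of_injective Ψ hΨ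
  have hc1 : ∀ j : Fin n, Fintype.card {g : {x // x ∈ I} → S // g ≠ β j}
      = Fintype.card S ^ I.card - 1 := by
    intro j
    have := Fintype.card_subtype_compl (fun g : {x // x ∈ I} → S => g = β j)
    rw [Fintype.card_subtype_eq] at this
    simpa [Fintype.card_fun, Fintype.card_coe] using this
  have hc2 : Fintype.card Tgt
      = (Fintype.card S ^ I.card - 1) ^ n * Fintype.card S ^ (J.card - n * I.card) := by
    rw [Fintype.card_prod, Fintype.card_pi]
    have hUcard : U.card = n * I.card := blocks_card I n τ hdisj
    rw [Fintype.card_fun, Fintype.card_coe, Finset.card_sdiff_of_subset hUJ, hUcard]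
    congr 1
    rw [Finset.prod_congr rfl (fun j _ => hc1 j), Finset.prod_const, Finset.card_univ,
      Fintype.card_fin]
  rw [hc2] at hcard
  exact hcard

private lemma limit_exists {S : Type} [Fintype S] [Nonempty S] {m : ℕ} (N : Fin m → ℤ)
    (θ : ℤ → ((Fin m → S) → S)) (y : ℤ → S)
    (h : ∀ M : ℕ, ∃ w : ℤ → S, ∀ x ∈ Finset.Icc (-(M : ℤ)) (M : ℤ),
      θ x (fun i => w (x + N i)) = y x) :
    ∃ c : ℤ → S, ∀ x : ℤ, θ x (fun i => c (x + N i)) = y x := by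
  choose w hw using h
  set U : Ultrafilter ℕ := Ultrafilter.of Filter.atTop with hUdef
  have hUtop : ∀ k : ℕ, {n : ℕ | k ≤ n} ∈ U := by
    intro k
    exact Ultrafilter.of_le Filter.atTop (Filter.mem_atTop k)
  have hval : ∀ z : ℤ, ∃ s : S, {n : ℕ | w n z = s} ∈ U := by
    intro z
    by_contra hcon
    push_neg at hcon
    have hcompl : ∀ s : S, {n : ℕ | w n z ≠ s} ∈ U := by
      intro s
      exact (Ultrafilter.compl_mem_iff_notMem).mpr (hcon s)
    have hint : (⋂ s ∈ (Finset.univ : Finset S), {n : ℕ | w n z ≠ s}) ∈ U :=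
      (Filter.biInter_finset_mem _).mpr (fun s _ => hcompl s)
    have hempty : (⋂ s ∈ (Finset.univ : Finset S), {n : ℕ | w n z ≠ s}) = ∅ := by
      ext n
      simp only [Set.mem_iInter, Set.mem_setOf_eq, Set.mem_empty_iff_false, iff_false,
        not_forall]
      exact ⟨w n z, Finset.mem_univ _, fun hne => hne rfl⟩
    rw [hempty] at hint
    exact Ultrafilter.empty_notMem hint
  choose c hc using hval
  refine ⟨c, fun x => ?_⟩
  have hA : (⋂ i ∈ (Finset.univ : Finset (Fin m)), {n : ℕ | w n (x + N i) = c (x + N i)}) ∈ U :=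
    (Filter.biInter_finset_mem _).mpr (fun i _ => hc (x + N i))
  have hB : {n : ℕ | x.natAbs ≤ n} ∈ U := hUtop x.natAbs
  obtain ⟨n, hn⟩ := Filter.nonempty_of_mem (Filter.inter_mem hA hB)
  obtain ⟨hn1, hn2⟩ := hn
  simp only [Set.mem_iInter, Set.mem_setOf_eq] at hn1 hn2
  have hxmem : x ∈ Finset.Icc (-(n : ℤ)) (n : ℤ) := by
    rw [Finset.mem_Icc]
    omega
  have := hw n x hxmem
  rw [← this]
  congr 1
  funext i
  exact (hn1 i (Finset.mem_univ i)).symm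



private lemma final_arith (s L n r Kc Jc : ℕ) (hs2 : 2 ≤ s)
    (hkey : s ^ (2*r) * (s ^ L - 1) ^ n < (s ^ L) ^ n)
    (hJc : Jc = Kc + 2*r) (hnL : n * L ≤ Kc)
    (hch : s ^ Kc ≤ (s ^ L - 1) ^ n * s ^ (Jc - n * L)) : False := by
  have h5 : Jc - n * L = (Kc - n * L) + 2 * r := by omega
  have hfinal : s ^ Kc < s ^ Kc := by
    calc s ^ Kc
        ≤ (s ^ L - 1) ^ n * s ^ (Jc - n * L) := hch
      _ = (s ^ (2*r) * (s ^ L - 1) ^ n) * s ^ (Kc - n * L) := by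
          rw [h5, pow_add]
          ring
      _ < (s ^ L) ^ n * s ^ (Kc - n * L) :=
          mul_lt_mul_of_pos_right hkey (pow_pos (by omega) _)
      _ = s ^ Kc := by
          rw [← pow_mul, ← pow_add]
          congr 1
          have h6 : L * n = n * L := Nat.mul_comm _ _
          omega
  exact lt_irrefl _ hfinal

private lemma moore_dir {S : Type} [Fintype S] [Nontrivial S] {m : ℕ}
    (N : Fin m → ℤ) (θ : ℤ → ((Fin m → S) → S)) (hrec : Recurrent θ)
    (H : (ℤ → S) → (ℤ → S))
    (hH : ∀ w x, H w x = θ x (fun i => w (x + N i)))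
    (hsurj : Function.Surjective H) : PreInjective H := by
  intro c e hfin hce
  by_contra hne
  obtain ⟨s₀⟩ : Nonempty S := inferInstance
  have hs2 : 2 ≤ Fintype.card S := Fintype.one_lt_card
  set r : ℕ := Finset.univ.sup (fun i => (N i).natAbs) with hrdef
  have hNr : ∀ i, -(r : ℤ) ≤ N i ∧ N i ≤ (r : ℤ) := by
    intro i
    have h1 : (N i).natAbs ≤ r :=
      Finset.le_sup (f := fun i => (N i).natAbs) (Finset.mem_univ i)
    omega
  set diffs : Finset ℤ := hfin.toFinset with hdiffsdef
  have hdmem : ∀ z, z ∈ diffs ↔ c z ≠ e z := by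
    intro z
    rw [hdiffsdef, Set.Finite.mem_toFinset]
    exact Iff.rfl
  have hdne : diffs.Nonempty := by
    obtain ⟨z, hz⟩ := Function.ne_iff.mp hne
    exact ⟨z, (hdmem z).mpr hz⟩
  set A : ℤ := diffs.min' hdne with hAdef
  set B : ℤ := diffs.max' hdne with hBdef
  have hAB : A ≤ B := Finset.min'_le _ _ (Finset.max'_mem _ _)
  have hdsub : ∀ z ∈ diffs, A ≤ z ∧ z ≤ B :=
    fun z hz => ⟨Finset.min'_le _ _ hz, Finset.le_max' _ _ hz⟩
  set Ifin : Finset ℤ := Finset.Icc (A - 2*r) (B + 2*r) with hIfindef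
  set L : ℕ := Ifin.card with hLdef
  have hLz : (L : ℤ) = B - A + 1 + 4*r := by
    rw [hLdef, hIfindef, Int.card_Icc]
    omega
  have hL1 : 1 ≤ L := by omega
  have hq2 : 2 ≤ Fintype.card S ^ L := by
    have h : 1 < Fintype.card S ^ L := one_lt_pow' (by omega) (by omega)
    omega
  obtain ⟨n, hn0, hkey⟩ := key_ineq (Fintype.card S ^ L) (Fintype.card S ^ (2*r)) hq2
  obtain ⟨T, hTcard, hTmatch⟩ := multi_match θ hrec Ifin (n * L)
  obtain ⟨τ, hτT, hτgap⟩ := spacing L hL1 n T hTcard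
  have hmatch : ∀ j : Fin n, ∀ x ∈ Ifin, θ (x + τ j) = θ x := fun j => hTmatch _ (hτT j)
  have hτmono : ∀ i j : Fin n, i ≤ j → τ i ≤ τ j := by
    intro i j hij
    rcases eq_or_lt_of_le hij with h | h
    · rw [h]
    · have := hτgap i j h; omega
  have hdisj : ∀ j k : Fin n, j ≠ k →
      Disjoint (Ifin.image (· + τ j)) (Ifin.image (· + τ k)) := by
    intro j k hjk
    rw [Finset.disjoint_left]
    rintro a ha hb
    obtain ⟨x, hx, rfl⟩ := Finset.mem_image.mp ha
    obtain ⟨y, hy, hyy⟩ := Finset.mem_image.mp hb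
    rw [hIfindef, Finset.mem_Icc] at hx hy
    rcases lt_or_gt_of_ne hjk with h | h
    · have := hτgap j k h; omega
    · have := hτgap k j h; omega
  set j0 : Fin n := ⟨0, hn0⟩ with hj0def
  set jl : Fin n := ⟨n-1, by omega⟩ with hjldef
  have hτbounds : ∀ j : Fin n, τ j0 ≤ τ j ∧ τ j ≤ τ jl := by
    intro j
    constructor
    · refine hτmono j0 j ?_
      rw [Fin.le_def]
      have h1 : (j0 : ℕ) = 0 := rfl
      omega
    · refine hτmono j jl ?_
      rw [Fin.le_def]
      have h1 : (jl : ℕ) = n - 1 := rfl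
      have h2 := j.isLt
      omega
  set K : Finset ℤ := Finset.Icc (A - 2*r + τ j0) (B + 2*r + τ jl) with hKdef
  set J : Finset ℤ := Finset.Icc (A - 2*r + τ j0 - r) (B + 2*r + τ jl + r) with hJdef
  have hτ0l : τ j0 ≤ τ jl := (hτbounds jl).1
  have hKcard : (K.card : ℤ) = (B + 2*r + τ jl) - (A - 2*r + τ j0) + 1 := by
    rw [hKdef, Int.card_Icc]
    omega
  have hJcard : J.card = K.card + 2*r := by
    have h1 : (J.card : ℤ) = (B + 2*r + τ jl + r) - (A - 2*r + τ j0 - r) + 1 := by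
      rw [hJdef, Int.card_Icc]
      omega
    omega
  have hIJ : ∀ (j : Fin n), ∀ x ∈ Ifin, x + τ j ∈ J := by
    intro j x hx
    rw [hIfindef, Finset.mem_Icc] at hx
    have hb := hτbounds j
    rw [hJdef, Finset.mem_Icc]
    omega
  have hKJ : ∀ x ∈ K, ∀ i : Fin m, x + N i ∈ J := by
    intro x hx i
    rw [hKdef, Finset.mem_Icc] at hx
    have h1 := hNr i
    rw [hJdef, Finset.mem_Icc]
    omega
  have hUK : Finset.univ.biUnion (fun j : Fin n => Ifin.image (· + τ j)) ⊆ K := by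
    intro z hz
    rw [Finset.mem_biUnion] at hz
    obtain ⟨j, _, hz⟩ := hz
    obtain ⟨x, hx, rfl⟩ := Finset.mem_image.mp hz
    rw [hIfindef, Finset.mem_Icc] at hx
    have hb := hτbounds j
    rw [hKdef, Finset.mem_Icc]
    omega
  have hnLK : n * L ≤ K.card := by
    have h := Finset.card_le_card hUK
    rw [blocks_card Ifin n τ hdisj] at h
    have h2 : n * Ifin.card = n * L := by rw [hLdef]
    omega
  -- the replacement machinery
  have huniq : ∀ z : ℤ, ∀ j k : Fin n, z - τ j ∈ Ifin → z - τ k ∈ Ifin → j = k := by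
    intro z j k hj hk
    by_contra hjk
    exact (Finset.disjoint_left.mp (hdisj j k hjk)
      (Finset.mem_image.mpr ⟨z - τ j, hj, by ring⟩))
      (Finset.mem_image.mpr ⟨z - τ k, hk, by ring⟩)
  set Match : (ℤ → S) → Fin n → Prop := fun w j => ∀ y ∈ Ifin, w (y + τ j) = e y
    with hMatchdef
  set Φ : (ℤ → S) → (ℤ → S) := fun w z =>
    if h : ∃ j : Fin n, z - τ j ∈ Ifin ∧ Match w j then c (z - τ h.choose) else w z
    with hΦdef
  have hΦ_match : ∀ w (j : Fin n), Match w j → ∀ z, z - τ j ∈ Ifin →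
      Φ w z = c (z - τ j) := by
    intro w j hm z hz
    have hex : ∃ j : Fin n, z - τ j ∈ Ifin ∧ Match w j := ⟨j, hz, hm⟩
    rw [hΦdef]
    simp only [dif_pos hex]
    have := huniq z hex.choose j hex.choose_spec.1 hz
    rw [this]
  have hΦ_nomatch : ∀ w (j : Fin n), ¬ Match w j → ∀ z, z - τ j ∈ Ifin →
      Φ w z = w z := by
    intro w j hm z hz
    have hnex : ¬ ∃ j : Fin n, z - τ j ∈ Ifin ∧ Match w j := by
      rintro ⟨j', hj', hm'⟩
      exact hm ((huniq z j' j hj' hz) ▸ hm')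
    rw [hΦdef]
    simp only [dif_neg hnex]
  have hΦ_out : ∀ w z, (∀ j : Fin n, z - τ j ∉ Ifin) → Φ w z = w z := by
    intro w z hz
    have hnex : ¬ ∃ j : Fin n, z - τ j ∈ Ifin ∧ Match w j := by
      rintro ⟨j', hj', _⟩
      exact hz j' hj'
    rw [hΦdef]
    simp only [dif_neg hnex]
  -- erasability
  have herase : ∀ u v : ℤ → S,
      (∀ z, (∀ j : Fin n, z - τ j ∉ Ifin) → u z = v z) →
      (∀ j : Fin n, (∀ z, z - τ j ∈ Ifin → u z = v z) ∨
        ((∀ z, z - τ j ∈ Ifin → u z = c (z - τ j)) ∧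
         (∀ z, z - τ j ∈ Ifin → v z = e (z - τ j)))) →
      H u = H v := by
    intro u v hout hblk
    funext x
    rw [hH, hH]
    by_cases hall : ∀ i, u (x + N i) = v (x + N i)
    · congr 1
      funext i
      exact hall i
    · push_neg at hall
      obtain ⟨i, hi⟩ := hall
      have hzblk : ∃ j : Fin n, x + N i - τ j ∈ Ifin := by
        by_contra hno
        push_neg at hno
        exact hi (hout _ hno)
      obtain ⟨j, hj⟩ := hzblk
      rcases hblk j with hsame | ⟨hu, hv⟩
      · exact absurd (hsame _ hj) hi
      have hdz : x + N i - τ j ∈ diffs := by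
        rw [hdmem]
        intro hceq
        exact hi (by rw [hu _ hj, hv _ hj, hceq])
      have hdzb := hdsub _ hdz
      have hwin : ∀ i' : Fin m, x + N i' - τ j ∈ Ifin := by
        intro i'
        have h1 := hNr i
        have h2 := hNr i'
        rw [hIfindef, Finset.mem_Icc]
        omega
      have hxI : x - τ j ∈ Ifin := by
        have h1 := hNr i
        rw [hIfindef, Finset.mem_Icc]
        omega
      have hθx : θ x = θ (x - τ j) := by
        have h := hmatch j (x - τ j) hxI
        rw [show (x - τ j) + τ j = x from by ring] at h
        exact h
      have hce' := congrFun hce (x - τ j)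
      rw [hH, hH] at hce'
      have e1 : θ x (fun i' => u (x + N i')) =
          θ (x - τ j) (fun i' => c ((x - τ j) + N i')) := by
        rw [hθx]
        congr 1
        funext i'
        rw [hu _ (hwin i')]
        congr 1
        ring
      have e2 : θ x (fun i' => v (x + N i')) =
          θ (x - τ j) (fun i' => e ((x - τ j) + N i')) := by
        rw [hθx]
        congr 1
        funext i'
        rw [hv _ (hwin i')]
        congr 1
        ring
      rw [e1, e2, hce']
  have hΦH : ∀ w, H (Φ w) = H w := by
    intro w
    apply herase
    · intro z hz
      exact hΦ_out w z hz
    · intro j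
      by_cases hm : Match w j
      · right
        refine ⟨fun z hz => hΦ_match w j hm z hz, fun z hz => ?_⟩
        have h := hm (z - τ j) hz
        rw [show z - τ j + τ j = z from by ring] at h
        exact h
      · left
        exact fun z hz => hΦ_nomatch w j hm z hz
  have hΦ_avoid : ∀ w (j : Fin n), ∃ x : {x // x ∈ Ifin},
      Φ w ((x : ℤ) + τ j) ≠ e (x : ℤ) := by
    intro w j
    by_cases hm : Match w j
    · obtain ⟨d, hd⟩ := hdne
      have hdI : d ∈ Ifin := by
        have := hdsub d hd
        rw [hIfindef, Finset.mem_Icc]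
        omega
      refine ⟨⟨d, hdI⟩, ?_⟩
      have h1 : Φ w (d + τ j) = c d := by
        have h := hΦ_match w j hm (d + τ j)
          (by rw [show d + τ j - τ j = d from by ring]; exact hdI)
        rw [show d + τ j - τ j = d from by ring] at h
        exact h
      rw [h1]
      exact (hdmem d).mp hd
    · simp only [hMatchdef] at hm
      push_neg at hm
      obtain ⟨y, hy, hne'⟩ := hm
      refine ⟨⟨y, hy⟩, ?_⟩
      have h1 : Φ w (y + τ j) = w (y + τ j) := by
        refine hΦ_nomatch w j ?_ _ (by rw [show y + τ j - τ j = y from by ring]; exact hy)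
        simp only [hMatchdef]
        push_neg
        exact ⟨y, hy, hne'⟩
      rw [h1]
      exact hne'
  -- g: local rule on patterns
  set g : ({x // x ∈ J} → S) → ({x // x ∈ K} → S) := fun p x =>
    θ (x : ℤ) (fun i => if h : (x : ℤ) + N i ∈ J then p ⟨_, h⟩ else s₀) with hgdef
  have hg : ∀ (v : ℤ → S) (x : {x // x ∈ K}),
      g (fun z => v (z : ℤ)) x = H v (x : ℤ) := by
    intro v x
    rw [hgdef, hH]
    simp only
    congr 1
    funext i
    rw [dif_pos (hKJ _ x.2 i)]
  -- surjectivity onto K-patterns through the avoid set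
  have hcardK : Fintype.card ({x // x ∈ K} → S) ≤
      Fintype.card {f : {x // x ∈ J} → S //
        ∀ j : Fin n, ∃ x : {x // x ∈ Ifin},
          f ⟨(x : ℤ) + τ j, hIJ j x x.2⟩ ≠ (fun x : {x // x ∈ Ifin} => e (x : ℤ)) x} := by
    apply Fintype.card_le_of_surjective (fun f => g f.1)
    intro u
    set y : ℤ → S := fun z => if h : z ∈ K then u ⟨z, h⟩ else s₀ with hydef
    obtain ⟨w, hwy⟩ := hsurj y
    refine ⟨⟨fun z => Φ w (z : ℤ), fun j => ?_⟩, ?_⟩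
    · obtain ⟨x, hx⟩ := hΦ_avoid w j
      exact ⟨x, hx⟩
    · funext x
      show g (fun z : {x // x ∈ J} => Φ w (z : ℤ)) x = u x
      have h1 : g (fun z : {x // x ∈ J} => Φ w (z : ℤ)) x = H (Φ w) (x : ℤ) :=
        hg (Φ w) x
      rw [h1, hΦH w, hwy, hydef]
      simp only [dif_pos x.2]
  have hbound := count_avoid Ifin J n τ hIJ hdisj (fun j x => e (x : ℤ))
  have hcardfun : Fintype.card ({x // x ∈ K} → S) = Fintype.card S ^ K.card := by
    rw [Fintype.card_fun, Fintype.card_coe]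
  have hchain : Fintype.card S ^ K.card ≤
      (Fintype.card S ^ L - 1) ^ n * Fintype.card S ^ (J.card - n * L) := by
    rw [← hcardfun]
    refine le_trans hcardK (le_trans hbound ?_)
    rw [← hLdef]
  exact final_arith (Fintype.card S) L n r K.card J.card hs2 hkey hJcard hnLK hchain



private lemma final_arith2 (s L n r Kc Jc : ℕ) (hs2 : 2 ≤ s)
    (hkey : s ^ (2*r) * (s ^ L - 1) ^ n < (s ^ L) ^ n)
    (hJc : Jc = Kc + 2*r) (hnL : n * L ≤ Kc) :
    (s ^ L - 1) ^ n * s ^ (Jc - n * L) < s ^ Kc := by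
  have h5 : Jc - n * L = (Kc - n * L) + 2 * r := by omega
  calc (s ^ L - 1) ^ n * s ^ (Jc - n * L)
      = (s ^ (2*r) * (s ^ L - 1) ^ n) * s ^ (Kc - n * L) := by
        rw [h5, pow_add]
        ring
    _ < (s ^ L) ^ n * s ^ (Kc - n * L) :=
        mul_lt_mul_of_pos_right hkey (pow_pos (by omega) _)
    _ = s ^ Kc := by
        rw [← pow_mul, ← pow_add]
        congr 1
        have h6 : L * n = n * L := Nat.mul_comm _ _
        omega

private lemma myhill_dir {S : Type} [Fintype S] [Nontrivial S] {m : ℕ}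
    (N : Fin m → ℤ) (θ : ℤ → ((Fin m → S) → S)) (hrec : Recurrent θ)
    (H : (ℤ → S) → (ℤ → S))
    (hH : ∀ w x, H w x = θ x (fun i => w (x + N i)))
    (hpre : PreInjective H) : Function.Surjective H := by
  intro y
  by_contra hno
  push_neg at hno
  obtain ⟨s₀⟩ : Nonempty S := inferInstance
  have hs2 : 2 ≤ Fintype.card S := Fintype.one_lt_card
  set r : ℕ := Finset.univ.sup (fun i => (N i).natAbs) with hrdef
  have hNr : ∀ i, -(r : ℤ) ≤ N i ∧ N i ≤ (r : ℤ) := by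
    intro i
    have h1 : (N i).natAbs ≤ r :=
      Finset.le_sup (f := fun i => (N i).natAbs) (Finset.mem_univ i)
    omega
  -- extract a finite orphan interval
  have horph : ∃ M : ℕ, ∀ w : ℤ → S, ∃ x ∈ Finset.Icc (-(M:ℤ)) (M:ℤ), H w x ≠ y x := by
    by_contra hcon
    push_neg at hcon
    have hcon' : ∀ M : ℕ, ∃ w : ℤ → S, ∀ x ∈ Finset.Icc (-(M : ℤ)) (M : ℤ),
        θ x (fun i => w (x + N i)) = y x := by
      intro M
      obtain ⟨w, hw⟩ := hcon M
      exact ⟨w, fun x hx => by rw [← hH]; exact hw x hx⟩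
    obtain ⟨c, hc⟩ := limit_exists N θ y hcon'
    exact hno c (funext fun x => by rw [hH]; exact hc x)
  obtain ⟨M, hM⟩ := horph
  set I0 : Finset ℤ := Finset.Icc (-(M:ℤ)) (M:ℤ) with hI0def
  set ℓ : ℕ := I0.card with hℓdef
  have hℓz : (ℓ : ℤ) = 2*M + 1 := by
    rw [hℓdef, hI0def, Int.card_Icc]
    omega
  have hℓ1 : 1 ≤ ℓ := by omega
  have hq2 : 2 ≤ Fintype.card S ^ ℓ := by
    have h : 1 < Fintype.card S ^ ℓ := one_lt_pow' (by omega) (by omega)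
    omega
  obtain ⟨n, hn0, hkey⟩ := key_ineq (Fintype.card S ^ ℓ) (Fintype.card S ^ (2*r)) hq2
  obtain ⟨T, hTcard, hTmatch⟩ := multi_match θ hrec I0 (n * ℓ)
  obtain ⟨τ, hτT, hτgap⟩ := spacing ℓ hℓ1 n T hTcard
  have hmatch : ∀ j : Fin n, ∀ x ∈ I0, θ (x + τ j) = θ x := fun j => hTmatch _ (hτT j)
  have hτmono : ∀ i j : Fin n, i ≤ j → τ i ≤ τ j := by
    intro i j hij
    rcases eq_or_lt_of_le hij with h | h
    · rw [h]
    · have := hτgap i j h; omega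
  have hdisj : ∀ j k : Fin n, j ≠ k →
      Disjoint (I0.image (· + τ j)) (I0.image (· + τ k)) := by
    intro j k hjk
    rw [Finset.disjoint_left]
    rintro a ha hb
    obtain ⟨x, hx, rfl⟩ := Finset.mem_image.mp ha
    obtain ⟨z, hz, hyy⟩ := Finset.mem_image.mp hb
    rw [hI0def, Finset.mem_Icc] at hx hz
    rcases lt_or_gt_of_ne hjk with h | h
    · have := hτgap j k h; omega
    · have := hτgap k j h; omega
  set j0 : Fin n := ⟨0, hn0⟩ with hj0def
  set jl : Fin n := ⟨n-1, by omega⟩ with hjldef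
  have hτbounds : ∀ j : Fin n, τ j0 ≤ τ j ∧ τ j ≤ τ jl := by
    intro j
    constructor
    · refine hτmono j0 j ?_
      rw [Fin.le_def]
      have h1 : (j0 : ℕ) = 0 := rfl
      omega
    · refine hτmono j jl ?_
      rw [Fin.le_def]
      have h1 : (jl : ℕ) = n - 1 := rfl
      have h2 := j.isLt
      omega
  have hτ0l : τ j0 ≤ τ jl := (hτbounds jl).1
  set J : Finset ℤ := Finset.Icc (-(M:ℤ) + τ j0) ((M:ℤ) + τ jl) with hJdef
  set Jp : Finset ℤ := Finset.Icc (-(M:ℤ) + τ j0 - r) ((M:ℤ) + τ jl + r) with hJpdef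
  have hJcard : (J.card : ℤ) = ((M:ℤ) + τ jl) - (-(M:ℤ) + τ j0) + 1 := by
    rw [hJdef, Int.card_Icc]
    omega
  have hJpcard : Jp.card = J.card + 2*r := by
    have h1 : (Jp.card : ℤ) = ((M:ℤ) + τ jl + r) - (-(M:ℤ) + τ j0 - r) + 1 := by
      rw [hJpdef, Int.card_Icc]
      omega
    omega
  have hIJp : ∀ (j : Fin n), ∀ x ∈ I0, x + τ j ∈ Jp := by
    intro j x hx
    rw [hI0def, Finset.mem_Icc] at hx
    have hb := hτbounds j
    rw [hJpdef, Finset.mem_Icc]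
    omega
  have hUJ : Finset.univ.biUnion (fun j : Fin n => I0.image (· + τ j)) ⊆ J := by
    intro z hz
    rw [Finset.mem_biUnion] at hz
    obtain ⟨j, _, hz⟩ := hz
    obtain ⟨x, hx, rfl⟩ := Finset.mem_image.mp hz
    rw [hI0def, Finset.mem_Icc] at hx
    have hb := hτbounds j
    rw [hJdef, Finset.mem_Icc]
    omega
  have hnLJ : n * ℓ ≤ J.card := by
    have h := Finset.card_le_card hUJ
    rw [blocks_card I0 n τ hdisj] at h
    have h2 : n * I0.card = n * ℓ := by rw [hℓdef]
    omega
  have hJpJ : ∀ z : ℤ, z ∉ Jp → ∀ i : Fin m, z + N i ∉ J := by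
    intro z hz i hmem
    apply hz
    rw [hJdef, Finset.mem_Icc] at hmem
    have h1 := hNr i
    rw [hJpdef, Finset.mem_Icc]
    omega
  -- orphan transfers to each block
  have horphτ : ∀ (j : Fin n) (w : ℤ → S), ∃ x ∈ I0, H w (x + τ j) ≠ y x := by
    intro j w
    obtain ⟨x, hx, hne'⟩ := hM (fun z => w (z + τ j))
    refine ⟨x, hx, fun heq => hne' ?_⟩
    rw [← heq, hH, hH, ← hmatch j x hx]
    congr 1
    funext i
    show w (x + N i + τ j) = w (x + τ j + N i)
    congr 1
    ring
  -- the strict cardinality bound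
  have hb := count_avoid I0 Jp n τ hIJp hdisj (fun j x => y (x:ℤ))
  have hlt : Fintype.card {f : {x // x ∈ Jp} → S //
      ∀ j : Fin n, ∃ x : {x // x ∈ I0},
        f ⟨(x : ℤ) + τ j, hIJp j x x.2⟩ ≠ (fun j (x : {x // x ∈ I0}) => y (x:ℤ)) j x}
      < Fintype.card ({x // x ∈ J} → S) := by
    rw [Fintype.card_fun, Fintype.card_coe]
    refine lt_of_le_of_lt hb ?_
    have harith := final_arith2 (Fintype.card S) ℓ n r J.card Jp.card hs2 hkey
      hJpcard hnLJ
    rw [← hℓdef]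
    exact harith
  -- ext and the non-injective map
  set ext : ({x // x ∈ J} → S) → (ℤ → S) :=
    fun p z => if h : z ∈ J then p ⟨z, h⟩ else s₀ with hextdef
  have hGm : ∀ p : {x // x ∈ J} → S, ∀ j : Fin n, ∃ x : {x // x ∈ I0},
      (fun z : {x // x ∈ Jp} => H (ext p) (z : ℤ))
        ⟨(x : ℤ) + τ j, hIJp j x x.2⟩ ≠ y (x : ℤ) := by
    intro p j
    obtain ⟨x, hx, h⟩ := horphτ j (ext p)
    exact ⟨⟨x, hx⟩, h⟩
  obtain ⟨p, p', hpp', hGeq⟩ := Fintype.exists_ne_map_eq_of_card_lt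
    (fun p : {x // x ∈ J} → S =>
      (⟨fun z : {x // x ∈ Jp} => H (ext p) (z : ℤ), hGm p⟩ :
        {f : {x // x ∈ Jp} → S // ∀ j : Fin n, ∃ x : {x // x ∈ I0},
          f ⟨(x : ℤ) + τ j, hIJp j x x.2⟩ ≠ (fun j (x : {x // x ∈ I0}) => y (x:ℤ)) j x}))
    hlt
  have hwne : ext p ≠ ext p' := by
    intro heq
    apply hpp'
    funext z
    have h1 := congrFun heq (z : ℤ)
    rw [hextdef] at h1
    simp only [dif_pos z.2] at h1
    exact h1
  have hdiff : {z : ℤ | ext p z ≠ ext p' z}.Finite := by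
    refine Set.Finite.subset J.finite_toSet ?_
    intro z hz
    by_contra hzJ
    have hzJ' : z ∉ J := fun h => hzJ (Finset.mem_coe.mpr h)
    apply hz
    show ext p z = ext p' z
    rw [hextdef]
    simp only [dif_neg hzJ']
  have hHeq : H (ext p) = H (ext p') := by
    funext z
    by_cases hz : z ∈ Jp
    · exact congrFun (congrArg Subtype.val hGeq) ⟨z, hz⟩
    · rw [hH, hH]
      congr 1
      funext i
      have hzi := hJpJ z hz i
      rw [hextdef]
      simp only [dif_neg hzi]
  exact hwne (hpre (ext p) (ext p') hdiff hHeq)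
/-- Garden of Eden theorem for recurrent 1D NUCA: if `θ` is a recurrent
rule distribution over ℤ, then the global update rule `H_θ` is surjective if and
only if it is pre-injective. -/
theorem stmt_9 {S : Type} [Fintype S] [Nonempty S] {m : ℕ}
    (N : Fin m → ℤ) (θ : ℤ → ((Fin m → S) → S))
    (hrec : Recurrent θ)
    (H : (ℤ → S) → (ℤ → S))
    (hH : H = fun c x => θ x (fun i => c (x + N i))) :
    Function.Surjective H ↔ PreInjective H := by
  rcases subsingleton_or_nontrivial S with hsub | hnt
  · constructor
    · intro _ c e _ _
      funext x
      exact Subsingleton.elim _ _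
    · intro _ y
      exact ⟨y, funext fun x => Subsingleton.elim _ _⟩
  · have hH' : ∀ w x, H w x = θ x (fun i => w (x + N i)) := by
      intro w x
      rw [hH]
    exact ⟨fun hs => moore_dir N θ hrec H hH' hs,
           fun hp => myhill_dir N θ hrec H hH' hp⟩
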